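/- Let β = {W_1,…,W_q} be a partition in NC(n), and let β₀ ∈ NC(n) be the refinement of β in which every block W_j with |W_j| ≤ 2 is left intact, while every block W_j with |W_j| ≥ 3 is broken into the doubleton {min(W_j), max(W_j)} and |W_j| − 2 singletons. Then {α ∈ NC(n) : α ≪ β} = {α ∈ NC(n) : β₀ ≤ α ≤ β}. -/

import Mathlib

open scoped Classical

/-- The minimum of a finset of naturals (`0` if empty). -/
noncomputable def fmin (A : Finset ℕ) : ℕ := sInf (A : Set ℕ)

/-- The maximum of a finset of naturals (`0` if empty). -/
noncomputable def fmax (A : Finset ℕ) : ℕ := sSup (A : Set ℕ)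

/-- `α` is a partition of the finite set `F ⊆ ℕ`. -/
def IsPartitionOfSet (F : Finset ℕ) (α : Finset (Finset ℕ)) : Prop :=
  (∀ V ∈ α, V.Nonempty) ∧ (∀ V ∈ α, V ⊆ F) ∧ (∀ m ∈ F, ∃ V ∈ α, m ∈ V) ∧
    ∀ V ∈ α, ∀ W ∈ α, V ≠ W → V ∩ W = ∅

/-- `α` is a partition of `{1,…,n}`. -/
def IsPartitionOf (n : ℕ) (α : Finset (Finset ℕ)) : Prop :=
  IsPartitionOfSet (Finset.Icc 1 n) α

/-- Two distinct blocks of the family `π` cross: there are `a < b < c < d` with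
`a, c` in one block and `b, d` in a different block. -/
def IsCrossing (π : Finset (Finset ℕ)) : Prop :=
  ∃ A ∈ π, ∃ B ∈ π, A ≠ B ∧
    ∃ a ∈ A, ∃ b ∈ B, ∃ c ∈ A, ∃ d ∈ B, a < b ∧ b < c ∧ c < d

/-- `α ∈ NC(n)`: a non-crossing partition of `{1,…,n}`. -/
def IsNCPartition (n : ℕ) (α : Finset (Finset ℕ)) : Prop :=
  IsPartitionOf n α ∧ ¬ IsCrossing α

/-- Reverse refinement order `α ≤ β`: every block of `α` is contained in a block of `β`
(equivalently, every block of `β` is a union of blocks of `α`). -/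
def Refines (α β : Finset (Finset ℕ)) : Prop := ∀ V ∈ α, ∃ W ∈ β, V ⊆ W

/-- The partial order `α ≪ β`: `α ≤ β` and for every block `W` of `β` there is a block
`V` of `α` containing both `min W` and `max W`. -/
def LL (α β : Finset (Finset ℕ)) : Prop :=
  Refines α β ∧ ∀ W ∈ β, ∃ V ∈ α, fmin W ∈ V ∧ fmax W ∈ V

/-- A block `V` (of `α`) is `β`-special: some block `W` of `β` has the same min and max. -/
def SpecialBlock (β : Finset (Finset ℕ)) (V : Finset ℕ) : Prop :=
  ∃ W ∈ β, fmin V = fmin W ∧ fmax V = fmax W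

/-- `V` is an outer block of `α`: no block of `α` strictly nests around it. -/
def OuterBlock (α : Finset (Finset ℕ)) (V : Finset ℕ) : Prop :=
  ∀ V' ∈ α, ¬ (fmin V' < fmin V ∧ fmax V < fmax V')

/-- `π` is a linked partition of the finite set `F ⊆ ℕ`. -/
def IsLinkedPartitionOfSet (F : Finset ℕ) (π : Finset (Finset ℕ)) : Prop :=
  (∀ A ∈ π, A.Nonempty) ∧ (∀ A ∈ π, A ⊆ F) ∧ (∀ m ∈ F, ∃ A ∈ π, m ∈ A) ∧
    ∀ A ∈ π, ∀ B ∈ π, A ≠ B →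
      A ∩ B = ∅ ∨
        (2 ≤ A.card ∧ 2 ≤ B.card ∧ (A ∩ B).card = 1 ∧ fmin A ≠ fmin B ∧
          ∀ x ∈ A ∩ B, x = fmin A ∨ x = fmin B)

/-- `π ∈ NCL(F)`: a non-crossing linked partition of the finite set `F`. -/
def IsNCLOfSet (F : Finset ℕ) (π : Finset (Finset ℕ)) : Prop :=
  IsLinkedPartitionOfSet F π ∧ ¬ IsCrossing π

/-- `π ∈ NCL(n)`: a non-crossing linked partition of `{1,…,n}`. -/
def IsNCL (n : ℕ) (π : Finset (Finset ℕ)) : Prop :=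
  IsNCLOfSet (Finset.Icc 1 n) π

/-- The number of blocks of `π` containing `m`. -/
noncomputable def coverCount (π : Finset (Finset ℕ)) (m : ℕ) : ℕ :=
  (π.filter fun A => m ∈ A).card

/-- `m` is singly-covered by `π`: it lies in exactly one block. -/
def SinglyCovered (π : Finset (Finset ℕ)) (m : ℕ) : Prop := coverCount π m = 1

/-- `m` is doubly-covered by `π`: it lies in exactly two blocks. -/
def DoublyCovered (π : Finset (Finset ℕ)) (m : ℕ) : Prop := coverCount π m = 2

/-- The partition `π̂` generated by the blocks of `π`: its blocks are the connected
components of the ground set under the relation of lying in a common block of `π`. -/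
noncomputable def genPart (π : Finset (Finset ℕ)) : Finset (Finset ℕ) :=
  (π.sup id).image fun m =>
    (π.sup id).filter fun x =>
      Relation.EqvGen (fun a b => ∃ A ∈ π, a ∈ A ∧ b ∈ A) m x

/-- The unlinking `π̌` of a linked partition `π`. -/
noncomputable def unlink (π : Finset (Finset ℕ)) : Finset (Finset ℕ) :=
  π.image fun A => if SinglyCovered π (fmin A) then A else A.erase (fmin A)

/-- The block of `α` containing `m` (empty if there is none). -/
noncomputable def blockOf (α : Finset (Finset ℕ)) (m : ℕ) : Finset ℕ :=
  (α.filter fun V => m ∈ V).sup id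

/-- The successor of `m` in the cycle on the block `V` (elements in increasing order). -/
noncomputable def nextInBlock (V : Finset ℕ) (m : ℕ) : ℕ :=
  if m = fmax V then fmin V else fmin (V.filter fun x => m < x)

/-- The predecessor of `m` in the cycle on the block `V`. -/
noncomputable def prevInBlock (V : Finset ℕ) (m : ℕ) : ℕ :=
  if m = fmin V then fmax V else fmax (V.filter fun x => x < m)

/-- The permutation `P_α` associated to a partition `α`, as a function: each block
`{i₁ < i₂ < ⋯ < iₘ}` becomes the cycle `i₁ ↦ i₂ ↦ ⋯ ↦ iₘ ↦ i₁`. -/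
noncomputable def permOf (α : Finset (Finset ℕ)) (m : ℕ) : ℕ :=
  if m ∈ blockOf α m then nextInBlock (blockOf α m) m else m

/-- The inverse permutation `P_α⁻¹`, as a function. -/
noncomputable def permOfInv (α : Finset (Finset ℕ)) (m : ℕ) : ℕ :=
  if m ∈ blockOf α m then prevInBlock (blockOf α m) m else m

/-- The action `τ·α` of a map `τ` on a partition `α = {V₁,…,V_p}`, giving
`{τ(V₁),…,τ(V_p)}`. -/
def mapPart (τ : ℕ → ℕ) (α : Finset (Finset ℕ)) : Finset (Finset ℕ) :=
  α.image fun V => V.image τ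

/-- The cycled unlinking `π° := P_{π̂}⁻¹ · π̌`. -/
noncomputable def cycUnlink (π : Finset (Finset ℕ)) : Finset (Finset ℕ) :=
  mapPart (permOfInv (genPart π)) (unlink π)

/-- `NC(n)` as a finset. -/
noncomputable def NCF (n : ℕ) : Finset (Finset (Finset ℕ)) :=
  ((Finset.Icc 1 n).powerset.powerset).filter (IsNCPartition n)

/-- `NCL(n)` as a finset. -/
noncomputable def NCLF (n : ℕ) : Finset (Finset (Finset ℕ)) :=
  ((Finset.Icc 1 n).powerset.powerset).filter (IsNCL n)

/-- The restriction `π|_E`: the blocks of `π` contained in `E`. -/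
def restrictL (π : Finset (Finset ℕ)) (E : Finset ℕ) : Finset (Finset ℕ) :=
  π.filter fun A => A ⊆ E

/-- The partition `β₀` obtained from `β` by leaving blocks of size `≤ 2` intact and
breaking each block `W` with `|W| ≥ 3` into the doubleton `{min W, max W}` together
with `|W| - 2` singletons. -/
noncomputable def breakBlocks (β : Finset (Finset ℕ)) : Finset (Finset ℕ) :=
  β.biUnion fun W =>
    if W.card ≤ 2 then {W}
    else insert {fmin W, fmax W} ((W \ {fmin W, fmax W}).image fun x => ({x} : Finset ℕ))

/-! A block of `β₀` coming from a block `W` of `β` is either contained in `{min W, max W}` or a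
singleton of `W`, and some block of `β₀` contains both `min W` and `max W`. Singletons lie below
every partition covering them, so `β₀ ≤ α` says exactly that `min W` and `max W` share a block
of `α` for every `W ∈ β`. -/

lemma fmin_mem {A : Finset ℕ} (h : A.Nonempty) : fmin A ∈ A := by
  exact_mod_cast Nat.sInf_mem (s := (A : Set ℕ)) (by exact_mod_cast h.to_set)

lemma fmax_mem {A : Finset ℕ} (h : A.Nonempty) : fmax A ∈ A := by
  exact_mod_cast h.to_set.csSup_mem A.finite_toSet

lemma fmin_le {A : Finset ℕ} {x : ℕ} (hx : x ∈ A) : fmin A ≤ x :=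
  Nat.sInf_le (by exact_mod_cast hx)

lemma le_fmax {A : Finset ℕ} {x : ℕ} (hx : x ∈ A) : x ≤ fmax A :=
  le_csSup A.finite_toSet.bddAbove (by exact_mod_cast hx)

lemma subset_pair_fmin_fmax_of_card_le_two {A : Finset ℕ} (hc : A.card ≤ 2) :
    A ⊆ {fmin A, fmax A} := by
  intro x hx
  by_contra hx'
  simp only [Finset.mem_insert, Finset.mem_singleton, not_or] at hx'
  have hne : A.Nonempty := ⟨x, hx⟩
  have hminmax : fmin A ≠ fmax A := fun h =>
    hx'.2 (le_antisymm (le_fmax hx) (h ▸ fmin_le hx))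
  refine absurd hc (not_le.2 (Finset.two_lt_card.2 ?_))
  exact ⟨fmin A, fmin_mem hne, x, hx, fmax A, fmax_mem hne, Ne.symm hx'.1, hminmax, hx'.2⟩

lemma exists_mem_breakBlocks_of_mem (β : Finset (Finset ℕ)) {W : Finset ℕ} (hW : W ∈ β)
    (hWne : W.Nonempty) : ∃ V ∈ breakBlocks β, fmin W ∈ V ∧ fmax W ∈ V := by
  by_cases hc : W.card ≤ 2
  · refine ⟨W, ?_, fmin_mem hWne, fmax_mem hWne⟩
    exact Finset.mem_biUnion.2 ⟨W, hW, by simp [hc]⟩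
  · refine ⟨{fmin W, fmax W}, ?_, by simp, by simp⟩
    exact Finset.mem_biUnion.2 ⟨W, hW, by simp [hc]⟩

lemma exists_of_mem_breakBlocks {β : Finset (Finset ℕ)} {V : Finset ℕ}
    (hV : V ∈ breakBlocks β) :
    ∃ W ∈ β, V ⊆ {fmin W, fmax W} ∨ ∃ x ∈ W, V = {x} := by
  obtain ⟨W, hW, hVW⟩ := Finset.mem_biUnion.1 hV
  refine ⟨W, hW, ?_⟩
  by_cases hc : W.card ≤ 2
  · rw [if_pos hc, Finset.mem_singleton] at hVW
    subst hVW
    exact .inl (subset_pair_fmin_fmax_of_card_le_two hc)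
  · rw [if_neg hc, Finset.mem_insert, Finset.mem_image] at hVW
    rcases hVW with rfl | ⟨x, hx, rfl⟩
    · exact .inl subset_rfl
    · exact .inr ⟨x, Finset.mem_sdiff.1 hx |>.1, rfl⟩

lemma refines_breakBlocks_of_LL {α β : Finset (Finset ℕ)}
    (hcover : ∀ W ∈ β, ∀ m ∈ W, ∃ V ∈ α, m ∈ V) (h : LL α β) :
    Refines (breakBlocks β) α := by
  intro V hV
  obtain ⟨W, hW, hpair | ⟨x, hx, rfl⟩⟩ := exists_of_mem_breakBlocks hV
  · obtain ⟨U, hU, hmin, hmax⟩ := h.2 W hW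
    refine ⟨U, hU, hpair.trans ?_⟩
    simp [Finset.insert_subset_iff, hmin, hmax]
  · obtain ⟨U, hU, hxU⟩ := hcover W hW x hx
    exact ⟨U, hU, Finset.singleton_subset_iff.2 hxU⟩

lemma LL_of_refines_breakBlocks {α β : Finset (Finset ℕ)} (hβ : ∀ W ∈ β, W.Nonempty)
    (h₀ : Refines (breakBlocks β) α) (h : Refines α β) : LL α β := by
  refine ⟨h, fun W hW => ?_⟩
  obtain ⟨V₀, hV₀, hmin, hmax⟩ := exists_mem_breakBlocks_of_mem β hW (hβ W hW)
  obtain ⟨V, hV, hsub⟩ := h₀ V₀ hV₀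
  exact ⟨V, hV, hsub hmin, hsub hmax⟩

/-- Let `β ∈ NC(n)` and let `β₀` be the refinement of `β` breaking every
block `W` with `|W| ≥ 3` into `{min W, max W}` and `|W| - 2` singletons. Then
`{α ∈ NC(n) : α ≪ β} = {α ∈ NC(n) : β₀ ≤ α ≤ β}`. -/
theorem stmt4 (n : ℕ) (β : Finset (Finset ℕ)) (hβ : IsNCPartition n β) :
    {α : Finset (Finset ℕ) | IsNCPartition n α ∧ LL α β}
      = {α : Finset (Finset ℕ) |
          IsNCPartition n α ∧ Refines (breakBlocks β) α ∧ Refines α β} := by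
  obtain ⟨⟨hβne, hβsub, -, -⟩, -⟩ := hβ
  ext α
  constructor
  · rintro ⟨hα, hLL⟩
    have hcover : ∀ W ∈ β, ∀ m ∈ W, ∃ V ∈ α, m ∈ V :=
      fun W hW m hm => hα.1.2.2.1 m (hβsub W hW hm)
    exact ⟨hα, refines_breakBlocks_of_LL hcover hLL, hLL.1⟩
  · rintro ⟨hα, h₀, h⟩
    exact ⟨hα, LL_of_refines_breakBlocks hβne h₀ h⟩
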